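/- arXiv:1701.07216 — 2 statements merged into one kernel-verified Lean document; each statement's English description precedes it below -/
import Mathlib

section
/- For n ≥ 2 and 2 ≤ i ≤ n, let Y_{n,i} be the set of type B linked partitions τ of {1,...,n} such that vertex i is a legal destination, vertex i-1 is in τ but is not a legal destination, and neither (i-1, i) nor (-i, i-1) is an arc of τ. Then Σ_{τ ∈ Y_{n,i}} x^{os(τ)-1} = (i-2)·2^{n-2} (x+1)_{n-2} − (i-2)^2 · 2^{n-2} (x+1)_{n-3}. -/
open Finset Polynomial
open scoped Classical

/-! ### Tree-like tableaux (grid model)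
A cell is a pair (row index, column index), both 0-based.  A Ferrers diagram
is a finite lower set of cells.  A tree-like tableau of size `n` is a pair
`(F, P)` where `P` is the set of pointed cells of the diagram `F`. -/

def IsFerrersGrid (F : Finset (ℕ × ℕ)) : Prop :=
  ∀ p ∈ F, ∀ i j : ℕ, i ≤ p.1 → j ≤ p.2 → (i, j) ∈ F

def IsTLT (F P : Finset (ℕ × ℕ)) : Prop :=
  F.Nonempty ∧ IsFerrersGrid F ∧ P ⊆ F ∧ (0, 0) ∈ P ∧
  (∀ p ∈ P, p ≠ (0, 0) →
    Xor' (∃ i < p.1, (i, p.2) ∈ P) (∃ j < p.2, (p.1, j) ∈ P)) ∧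
  (∀ p ∈ F, ∃ q ∈ P, q.1 = p.1) ∧
  (∀ p ∈ F, ∃ q ∈ P, q.2 = p.2)

/-- The finite set of tree-like tableaux of size `n`. -/
noncomputable def TLT (n : ℕ) : Finset (Finset (ℕ × ℕ) × Finset (ℕ × ℕ)) :=
  ((Finset.range n ×ˢ Finset.range n).powerset ×ˢ
    (Finset.range n ×ˢ Finset.range n).powerset).filter
    (fun T => IsTLT T.1 T.2 ∧ T.2.card = n)

/-- number of non-root points in the topmost row -/
noncomputable def topT (P : Finset (ℕ × ℕ)) : ℕ :=
  (P.filter (fun p => p.1 = 0 ∧ p.2 ≠ 0)).card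
/-- number of non-root points in the leftmost column -/
noncomputable def leftT (P : Finset (ℕ × ℕ)) : ℕ :=
  (P.filter (fun p => p.2 = 0 ∧ p.1 ≠ 0)).card
/-- corners of a Ferrers diagram -/
noncomputable def cornersT (F : Finset (ℕ × ℕ)) : Finset (ℕ × ℕ) :=
  F.filter (fun p => (p.1 + 1, p.2) ∉ F ∧ (p.1, p.2 + 1) ∉ F)
/-- non-occupied corners -/
noncomputable def nocT (F P : Finset (ℕ × ℕ)) : ℕ :=
  ((cornersT F).filter (fun p => p ∉ P)).card
/-- occupied corners -/
noncomputable def ocT (F P : Finset (ℕ × ℕ)) : ℕ :=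
  ((cornersT F).filter (fun p => p ∈ P)).card
/-- symmetric (invariant under reflection across the main diagonal) -/
def IsSymTLT (F P : Finset (ℕ × ℕ)) : Prop :=
  F.image Prod.swap = F ∧ P.image Prod.swap = P

/-! ### Alternative tableaux (border-label model)
A Ferrers diagram of size `n` (empty rows and columns allowed) is encoded by
the set `C ⊆ {1,…,n}` of its column labels (labels of the south-east border
steps, read from north-east to south-west); the remaining labels are row
labels.  Row `r` and column `c` intersect in a cell (written `(r, c)`)
exactly when `r < c`.  Inside a row, cells further to the left have *larger*
column labels; inside a column, cells further up have *smaller* row labels.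
An alternative tableau is `(C, L, U)` where `L` (resp. `U`) is the set of
cells containing a left (resp. up) arrow. -/

def IsAT (n : ℕ) (C : Finset ℕ) (L U : Finset (ℕ × ℕ)) : Prop :=
  C ⊆ Finset.Icc 1 n ∧ Disjoint L U ∧
  (∀ p ∈ L ∪ U, p.1 ∈ Finset.Icc 1 n ∧ p.1 ∉ C ∧ p.2 ∈ C ∧ p.1 < p.2) ∧
  (∀ p ∈ L, ∀ c' : ℕ, p.2 < c' → (p.1, c') ∉ L ∪ U) ∧
  (∀ p ∈ U, ∀ r' : ℕ, r' < p.1 → (r', p.2) ∉ L ∪ U)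

/-- the finite set of alternative tableaux of size `n` -/
noncomputable def ATset (n : ℕ) :
    Finset (Finset ℕ × Finset (ℕ × ℕ) × Finset (ℕ × ℕ)) :=
  ((Finset.Icc 1 n).powerset ×ˢ
    ((Finset.Icc 1 n ×ˢ Finset.Icc 1 n).powerset ×ˢ
      (Finset.Icc 1 n ×ˢ Finset.Icc 1 n).powerset)).filter
    (fun T => IsAT n T.1 T.2.1 T.2.2)

/-- alternative tableaux of size `n` in which every column contains an up arrow -/
noncomputable def ATstar (n : ℕ) :
    Finset (Finset ℕ × Finset (ℕ × ℕ) × Finset (ℕ × ℕ)) :=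
  (ATset n).filter (fun T => ∀ c ∈ T.1, ∃ p ∈ T.2.2, p.2 = c)

/-- label of the topmost row -/
noncomputable def topRowA (n : ℕ) (C : Finset ℕ) : ℕ :=
  WithTop.untopD 0 ((Finset.Icc 1 n \ C).min)
/-- number of arrows in the topmost row -/
noncomputable def topA (n : ℕ) (C : Finset ℕ) (L U : Finset (ℕ × ℕ)) : ℕ :=
  ((L ∪ U).filter (fun p => p.1 = topRowA n C)).card
/-- number of unrestricted rows (rows with no left arrow) -/
noncomputable def urrA (n : ℕ) (C : Finset ℕ) (L : Finset (ℕ × ℕ)) : ℕ :=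
  ((Finset.Icc 1 n \ C).filter (fun r => ∀ p ∈ L, p.1 ≠ r)).card
/-- number of non-occupied corners (the corners are exactly the cells `(c-1, c)`
with `c` a column label and `c-1` a row label) -/
noncomputable def nocA (n : ℕ) (C : Finset ℕ) (L U : Finset (ℕ × ℕ)) : ℕ :=
  (C.filter (fun c => c - 1 ∈ Finset.Icc 1 n \ C ∧ (c - 1, c) ∉ L ∪ U)).card
/-- symmetric alternative tableau of size `2n` (reflection across the main
diagonal exchanges border label `k` with `2n+1-k`, rows with columns and
left arrows with up arrows) -/
def IsSymAT (n : ℕ) (C : Finset ℕ) (L U : Finset (ℕ × ℕ)) : Prop :=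
  (∀ k ∈ Finset.Icc 1 (2 * n), (k ∈ C ↔ (2 * n + 1 - k) ∉ C)) ∧
  (∀ r c : ℕ, (r, c) ∈ L ↔ (2 * n + 1 - c, 2 * n + 1 - r) ∈ U)

/-! ### Linked partitions (linear representation / arc model)
A linked partition of `{1,…,n}` is identified with its set of arcs `(i, j)`,
`i < j`: each vertex is the right-hand endpoint of at most one arc. -/

def IsLP (n : ℕ) (A : Finset (ℕ × ℕ)) : Prop :=
  (∀ p ∈ A, 1 ≤ p.1 ∧ p.1 < p.2 ∧ p.2 ≤ n) ∧
  (∀ p ∈ A, ∀ q ∈ A, p.2 = q.2 → p.1 = q.1)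

noncomputable def LP (n : ℕ) : Finset (Finset (ℕ × ℕ)) :=
  ((Finset.Icc 1 n ×ˢ Finset.Icc 1 n).powerset).filter (IsLP n)

/-- number of origins plus singletons (= vertices with no incoming arc) -/
noncomputable def osL (n : ℕ) (A : Finset (ℕ × ℕ)) : ℕ :=
  ((Finset.Icc 1 n).filter (fun j => ∀ p ∈ A, p.2 ≠ j)).card
/-- number of arcs with left-hand endpoint `1` -/
noncomputable def oneL (A : Finset (ℕ × ℕ)) : ℕ :=
  (A.filter (fun p => p.1 = 1)).card
/-- a destination: only a right-hand endpoint -/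
def IsDest (A : Finset (ℕ × ℕ)) (j : ℕ) : Prop :=
  (∃ p ∈ A, p.2 = j) ∧ ∀ p ∈ A, p.1 ≠ j

/-- consecutive pairs of a finite set of naturals -/
noncomputable def consecPairs (S : Finset ℕ) : Finset (ℕ × ℕ) :=
  (S ×ˢ S).filter (fun p => p.1 < p.2 ∧ ∀ k ∈ S, ¬(p.1 < k ∧ k < p.2))

/-- the set of row labels of cells of column `c` containing an arrow -/
noncomputable def colRows (L U : Finset (ℕ × ℕ)) (c : ℕ) : Finset ℕ :=
  ((L ∪ U).filter (fun p => p.2 = c)).image Prod.fst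

/-- the map `Φ`: for each column `j`, with the up arrow in row `i₁` and the
left arrows in rows `i₂ < … < i_t`, draw the arcs `(i₁,i₂), …, (i_{t-1},i_t), (i_t, j)`,
i.e. the consecutive pairs of `{i₁,…,i_t, j}`. -/
noncomputable def Phi (T : Finset ℕ × Finset (ℕ × ℕ) × Finset (ℕ × ℕ)) :
    Finset (ℕ × ℕ) :=
  T.1.biUnion (fun c => consecPairs (insert c (colRows T.2.1 T.2.2 c)))

/-! ### Type B alternative tableaux
Encoded by `(C, L, U)` with `C ⊆ Icc 1 n` the set of column labels of the
subdiagram; rows of the shifted diagram are labelled by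
`(Icc 1 n \ C) ∪ (-C)`, rows higher up having smaller labels.  Row `x` and
column `c` intersect in a cell exactly when (`x > 0` and `x < c`) or
(`x < 0` and `-x ≤ c`); the cell `(-c, c)` is the diagonal cell of row `-c`. -/

def cellB (n : ℕ) (C : Finset ℤ) (x c : ℤ) : Prop :=
  c ∈ C ∧ ((1 ≤ x ∧ x ≤ (n : ℤ) ∧ x ∉ C ∧ x < c) ∨ (x < 0 ∧ -x ∈ C ∧ -x ≤ c))

def IsATB (n : ℕ) (C : Finset ℤ) (L U : Finset (ℤ × ℤ)) : Prop :=
  C ⊆ Finset.Icc 1 (n : ℤ) ∧ Disjoint L U ∧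
  (∀ p ∈ L ∪ U, p.2 ∈ C ∧
    ((1 ≤ p.1 ∧ p.1 ≤ (n : ℤ) ∧ p.1 ∉ C ∧ p.1 < p.2) ∨
      (p.1 < 0 ∧ -p.1 ∈ C ∧ -p.1 < p.2))) ∧
  (∀ p ∈ L, ∀ c' : ℤ, p.2 < c' → (p.1, c') ∉ L ∪ U) ∧
  (∀ p ∈ U, ∀ x' : ℤ, x' < p.1 → (x', p.2) ∉ L ∪ U) ∧
  (∀ i ∈ C, (∃ p ∈ U, p.2 = i) → ∀ c' : ℤ, (-i, c') ∉ L ∪ U)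

noncomputable def ATB (n : ℕ) :
    Finset (Finset ℤ × Finset (ℤ × ℤ) × Finset (ℤ × ℤ)) :=
  ((Finset.Icc (1 : ℤ) (n : ℤ)).powerset ×ˢ
    ((Finset.Icc (-(n : ℤ)) (n : ℤ) ×ˢ Finset.Icc (1 : ℤ) (n : ℤ)).powerset ×ˢ
      (Finset.Icc (-(n : ℤ)) (n : ℤ) ×ˢ Finset.Icc (1 : ℤ) (n : ℤ)).powerset)).filter
    (fun T => IsATB n T.1 T.2.1 T.2.2)

/-- the row labels of a type B alternative tableau -/
noncomputable def rowsB (n : ℕ) (C : Finset ℤ) : Finset ℤ :=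
  (Finset.Icc (1 : ℤ) (n : ℤ) \ C) ∪ C.image (fun c => -c)

/-- number of unrestricted rows: row `x` is unrestricted when it contains no
left arrow and column `|x|` (if it exists) contains no up arrow -/
noncomputable def urrB (n : ℕ) (C : Finset ℤ) (L U : Finset (ℤ × ℤ)) : ℕ :=
  ((rowsB n C).filter (fun x => (∀ p ∈ L, p.1 ≠ x) ∧ ∀ p ∈ U, p.2 ≠ |x|)).card

/-- the corners of the shifted Ferrers diagram -/
noncomputable def cornersB (n : ℕ) (C : Finset ℤ) : Finset (ℤ × ℤ) :=
  (Finset.Icc (-(n : ℤ)) (n : ℤ) ×ˢ Finset.Icc (1 : ℤ) (n : ℤ)).filter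
    (fun p => cellB n C p.1 p.2 ∧ (∀ x' : ℤ, p.1 < x' → ¬ cellB n C x' p.2) ∧
      (∀ c' : ℤ, c' < p.2 → ¬ cellB n C p.1 c'))

/-- number of non-occupied diagonal corners -/
noncomputable def nocDiagB (n : ℕ) (C : Finset ℤ) (L U : Finset (ℤ × ℤ)) : ℕ :=
  ((cornersB n C).filter (fun p => p.1 = -p.2 ∧ p ∉ L ∪ U)).card
/-- number of non-occupied non-diagonal corners -/
noncomputable def nocOffB (n : ℕ) (C : Finset ℤ) (L U : Finset (ℤ × ℤ)) : ℕ :=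
  ((cornersB n C).filter (fun p => p.1 ≠ -p.2 ∧ p ∉ L ∪ U)).card

/-! ### Type B linked partitions
A pair `(V, A)`: for each `i ∈ {1,…,n}` exactly one of `i, -i` belongs to
the vertex set `V`; `A` is the set of arcs `(x, y)`, `x < y`, with each
vertex the right-hand endpoint of at most one arc. -/

def IsLPB (n : ℕ) (V : Finset ℤ) (A : Finset (ℤ × ℤ)) : Prop :=
  (∀ v ∈ V, 1 ≤ |v| ∧ |v| ≤ (n : ℤ)) ∧
  (∀ i ∈ Finset.Icc (1 : ℤ) (n : ℤ), ((i ∈ V ∧ -i ∉ V) ∨ (-i ∈ V ∧ i ∉ V))) ∧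
  (∀ p ∈ A, p.1 ∈ V ∧ p.2 ∈ V ∧ p.1 < p.2) ∧
  (∀ p ∈ A, ∀ q ∈ A, p.2 = q.2 → p.1 = q.1)

noncomputable def LPB (n : ℕ) : Finset (Finset ℤ × Finset (ℤ × ℤ)) :=
  ((Finset.Icc (-(n : ℤ)) (n : ℤ)).powerset ×ˢ
    (Finset.Icc (-(n : ℤ)) (n : ℤ) ×ˢ Finset.Icc (-(n : ℤ)) (n : ℤ)).powerset).filter
    (fun T => IsLPB n T.1 T.2)

/-- number of origins plus singletons (= vertices with no incoming arc) -/
noncomputable def osB (V : Finset ℤ) (A : Finset (ℤ × ℤ)) : ℕ :=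
  (V.filter (fun v => ∀ p ∈ A, p.2 ≠ v)).card

/-- a legal destination: `j` is only a right-hand endpoint, and its incoming
arc `(a, j)` satisfies `|a| < |j|` -/
def IsLegalDestB (A : Finset (ℤ × ℤ)) (j : ℤ) : Prop :=
  (∃ p ∈ A, p.2 = j ∧ |p.1| < |j|) ∧ ∀ p ∈ A, p.1 ≠ j

/-- consecutive pairs of a finite set of integers -/
noncomputable def consecPairsZ (S : Finset ℤ) : Finset (ℤ × ℤ) :=
  (S ×ˢ S).filter (fun p => p.1 < p.2 ∧ ∀ k ∈ S, ¬(p.1 < k ∧ k < p.2))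

/-- row labels of cells of column `c` containing an arrow -/
noncomputable def colRowsB (L U : Finset (ℤ × ℤ)) (c : ℤ) : Finset ℤ :=
  ((L ∪ U).filter (fun p => p.2 = c)).image Prod.fst

/-- column `c` contains an up arrow -/
def HasUp (U : Finset (ℤ × ℤ)) (c : ℤ) : Prop := ∃ p ∈ U, p.2 = c

/-- the map `Φ_B`: columns with an up arrow give positive vertices and chains
of arcs through their arrows (consecutive pairs of the arrow rows together
with the column label); columns without an up arrow give negative vertices
`-j` and arcs from `-j` to each row containing a left arrow of that column;
rows give positive vertices. -/
noncomputable def PhiB (n : ℕ) (T : Finset ℤ × Finset (ℤ × ℤ) × Finset (ℤ × ℤ)) :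
    Finset ℤ × Finset (ℤ × ℤ) :=
  ((Finset.Icc (1 : ℤ) (n : ℤ) \ T.1) ∪ T.1.filter (fun c => HasUp T.2.2 c) ∪
      (T.1.filter (fun c => ¬ HasUp T.2.2 c)).image (fun c => -c),
    (T.1.filter (fun c => HasUp T.2.2 c)).biUnion
        (fun c => consecPairsZ (insert c (colRowsB T.2.1 T.2.2 c))) ∪
      (T.1.filter (fun c => ¬ HasUp T.2.2 c)).biUnion
        (fun c => (colRowsB T.2.1 T.2.2 c).image (fun r => (-c, r))))


/-!
Fix the vertex set `V`: the signs of `i` and `i - 1` are forced to be positive and the other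
`n - 2` signs are free. An arc set on `V` is then an independent choice, for every vertex, of at
most one parent among the smaller vertices, so a sum over arc sets of a weight that is a product
over arcs and over sources (vertices without a parent) factors into a product over vertices.
The condition defining `Y_{n,i}` is "`i` is a legal destination and `(i - 1, i)` is not an arc"
minus "both `i` and `i - 1` are legal destinations", and each of the two is such a product
condition: every vertex of `E ⊆ {i - 1, i}` has to take one of its `i - 2` admissible parents.
Giving weight `1` to the minimum of `V`, which is always a source, and `x` to every other source,
the vertices outside `E`, ranked in `V \ E`, contribute `1, x + 1, x + 2, …`.
-/

section ParentSets

variable {α R : Type*} [DecidableEq α] [CommSemiring R]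

def parentSets (S : Finset α) (P : α → Finset α) : Finset (Finset (α × α)) :=
  (S.biUnion fun v => (P v).image (·, v)).powerset.filter
    fun A => ∀ p ∈ A, ∀ q ∈ A, p.2 = q.2 → p.1 = q.1

def sources (S : Finset α) (A : Finset (α × α)) : Finset α :=
  S.filter fun v => ∀ p ∈ A, p.2 ≠ v

variable {S : Finset α} {P : α → Finset α} {A B : Finset (α × α)}

theorem mem_parentSets :
    A ∈ parentSets S P ↔
      (∀ p ∈ A, p.2 ∈ S ∧ p.1 ∈ P p.2) ∧ ∀ p ∈ A, ∀ q ∈ A, p.2 = q.2 → p.1 = q.1 := by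
  simp only [parentSets, mem_filter, mem_powerset, subset_iff, mem_biUnion, mem_image]
  refine and_congr_left' (forall₂_congr fun p _ => ⟨?_, ?_⟩)
  · rintro ⟨v, hv, a, ha, rfl⟩
    exact ⟨hv, ha⟩
  · exact fun h => ⟨p.2, h.1, p.1, h.2, rfl⟩

theorem snd_ne_of_mem_parentSets {v : α} (hv : v ∉ S) (hA : A ∈ parentSets S P) :
    ∀ p ∈ A, p.2 ≠ v := fun p hp h => hv (h ▸ ((mem_parentSets.1 hA).1 p hp).1)

theorem parentSets_empty : parentSets (∅ : Finset α) P = {∅} := by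
  ext A
  simp +contextual [mem_parentSets, eq_empty_iff_forall_notMem]

theorem filter_parentSets_insert {v : α} (hv : v ∉ S) :
    (parentSets (insert v S) P).filter (fun A => ∀ p ∈ A, p.2 ≠ v) = parentSets S P := by
  ext A
  simp only [mem_filter, mem_parentSets, mem_insert]
  constructor
  · rintro ⟨⟨hA, huniq⟩, hv'⟩
    exact ⟨fun p hp => ⟨(hA p hp).1.resolve_left (hv' p hp), (hA p hp).2⟩, huniq⟩
  · rintro ⟨hA, huniq⟩
    exact ⟨⟨fun p hp => ⟨Or.inr (hA p hp).1, (hA p hp).2⟩, huniq⟩,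
      fun p hp h => hv (h ▸ (hA p hp).1)⟩

theorem insert_mem_parentSets {v a : α} (hv : v ∉ S) (ha : a ∈ P v)
    (hB : B ∈ parentSets S P) : insert (a, v) B ∈ parentSets (insert v S) P := by
  have hBv := snd_ne_of_mem_parentSets hv hB
  rw [mem_parentSets] at hB ⊢
  refine ⟨fun p hp => ?_, fun p hp q hq hpq => ?_⟩
  · rcases mem_insert.1 hp with rfl | hp
    · exact ⟨mem_insert_self _ _, ha⟩
    · exact ⟨mem_insert_of_mem (hB.1 p hp).1, (hB.1 p hp).2⟩
  · rcases mem_insert.1 hp with rfl | hp <;> rcases mem_insert.1 hq with rfl | hq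
    · rfl
    · exact absurd hpq.symm (hBv q hq)
    · exact absurd hpq (hBv p hp)
    · exact hB.2 p hp q hq hpq

theorem erase_mem_parentSets {v : α} {p : α × α} (hA : A ∈ parentSets (insert v S) P)
    (hp : p ∈ A) (hpv : p.2 = v) : A.erase p ∈ parentSets S P := by
  rw [mem_parentSets] at hA ⊢
  refine ⟨fun q hq => ?_, fun q hq r hr => hA.2 q (mem_of_mem_erase hq) r (mem_of_mem_erase hr)⟩
  obtain ⟨hqp, hq⟩ := mem_erase.1 hq
  refine ⟨(mem_insert.1 (hA.1 q hq).1).resolve_left fun hqv => hqp ?_, (hA.1 q hq).2⟩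
  exact Prod.ext (hA.2 q hq p hp (hqv.trans hpv.symm)) (hqv.trans hpv.symm)

theorem sum_parentSets_insert {M : Type*} [AddCommMonoid M] {v : α} (hv : v ∉ S)
    (F : Finset (α × α) → M) :
    ∑ A ∈ parentSets (insert v S) P, F A =
      ∑ B ∈ parentSets S P, (F B + ∑ a ∈ P v, F (insert (a, v) B)) := by
  rw [sum_add_distrib, ← sum_filter_add_sum_filter_not _ fun A => ∀ p ∈ A, p.2 ≠ v,
    filter_parentSets_insert hv, ← sum_product']
  congr 1
  symm
  refine sum_bij (fun q _ => insert (q.2, v) q.1) (fun q hq => ?_) (fun q hq r hr h => ?_)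
    (fun A hA => ?_) (fun _ _ => rfl)
  · rw [mem_product] at hq
    exact mem_filter.2 ⟨insert_mem_parentSets hv hq.2 hq.1, by simp⟩
  · rw [mem_product] at hq hr
    have hq' := snd_ne_of_mem_parentSets hv hq.1
    have hr' := snd_ne_of_mem_parentSets hv hr.1
    have h1 : q.1 = r.1 := by
      simpa [filter_insert, filter_true_of_mem hq', filter_true_of_mem hr'] using
        congrArg (filter fun p => p.2 ≠ v) h
    have h2 : (q.2, v) ∈ insert (r.2, v) r.1 := h ▸ mem_insert_self _ _
    rcases mem_insert.1 h2 with h2 | h2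
    · exact Prod.ext h1 (Prod.ext_iff.1 h2).1
    · exact absurd rfl (hr' _ h2)
  · obtain ⟨hA, hAv⟩ := mem_filter.1 hA
    push Not at hAv
    obtain ⟨p, hp, hpv⟩ := hAv
    refine ⟨(A.erase p, p.1), mem_product.2 ⟨erase_mem_parentSets hA hp hpv, ?_⟩, ?_⟩
    · simpa [hpv] using ((mem_parentSets.1 hA).1 p hp).2
    · simp [← hpv, insert_erase hp]

theorem mem_sources {v : α} : v ∈ sources S A ↔ v ∈ S ∧ ∀ p ∈ A, p.2 ≠ v :=
  mem_filter

theorem sources_insert_of_forall_ne {v : α} (hA : ∀ p ∈ A, p.2 ≠ v) :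
    sources (insert v S) A = insert v (sources S A) := by
  rw [sources, filter_insert, if_pos hA, sources]

theorem sources_insert_insert {v a : α} (hv : v ∉ S) :
    sources (insert v S) (insert (a, v) A) = sources S A := by
  ext w
  simp only [mem_sources, mem_insert, forall_eq_or_imp]
  constructor
  · rintro ⟨rfl | hw, hvw, hA⟩
    · exact absurd rfl hvw
    · exact ⟨hw, hA⟩
  · rintro ⟨hw, hA⟩
    exact ⟨Or.inr hw, fun h => hv (h ▸ hw), hA⟩

theorem sum_parentSets_prod_mul_prod_sources (S : Finset α) (P : α → Finset α)
    (g : α × α → R) (h : α → R) :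
    ∑ A ∈ parentSets S P, (∏ p ∈ A, g p) * ∏ v ∈ sources S A, h v =
      ∏ v ∈ S, (h v + ∑ a ∈ P v, g (a, v)) := by
  induction S using Finset.induction_on with
  | empty => simp [parentSets_empty, sources]
  | insert v S hv ih =>
    rw [sum_parentSets_insert hv, prod_insert hv, ← ih, mul_sum]
    refine sum_congr rfl fun B hB => ?_
    have hBv := snd_ne_of_mem_parentSets hv hB
    have hav : ∀ a, (a, v) ∉ B := fun a h => hBv _ h rfl
    simp only [sources_insert_of_forall_ne hBv, sources_insert_insert hv, prod_insert (hav _),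
      prod_insert (fun h => hv (mem_sources.1 h).1), add_mul, sum_mul]
    congr 1
    · ring
    · exact sum_congr rfl fun a _ => by ring

theorem disjoint_sources_iff {E : Finset α} (hE : E ⊆ S) :
    Disjoint E (sources S A) ↔ ∀ v ∈ E, ∃ p ∈ A, p.2 = v := by
  simp only [disjoint_left, mem_sources, not_and, not_forall, not_not]
  exact forall₂_congr fun v hv => by simp [hE hv]

theorem prod_ite_mul_prod_sources {E : Finset α} {m : α} (hm : m ∈ sources S A) (hmE : m ∉ E)
    (ok : α × α → Prop) [DecidablePred ok] (x : R) :
    (∏ p ∈ A, if ok p then (1 : R) else 0) *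
        ∏ v ∈ sources S A, (if v ∈ E then 0 else if v = m then 1 else x) =
      if (∀ p ∈ A, ok p) ∧ Disjoint E (sources S A) then x ^ (#(sources S A) - 1) else 0 := by
  rw [prod_boole]
  by_cases hok : ∀ p ∈ A, ok p
  swap
  · rw [if_neg hok, if_neg (fun h => hok h.1), zero_mul]
  rw [if_pos hok, one_mul]
  by_cases hE : Disjoint E (sources S A)
  · rw [if_pos ⟨hok, hE⟩, ← mul_prod_erase _ _ hm, if_neg hmE, if_pos rfl,
      one_mul, ← card_erase_of_mem hm, ← prod_const]
    refine prod_congr rfl fun v hv => ?_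
    obtain ⟨hvm, hv⟩ := mem_erase.1 hv
    rw [if_neg (disjoint_left.1 hE.symm hv), if_neg hvm]
  · obtain ⟨v, hvE, hv⟩ := not_disjoint_iff.1 hE
    rw [if_neg (fun h => hE h.2), prod_eq_zero hv (by rw [if_pos hvE])]

end ParentSets

theorem ascPochhammer_eval_eq_prod_range {R : Type*} [CommSemiring R] (N : ℕ) (y : R) :
    (ascPochhammer R N).eval y = ∏ k ∈ range N, (y + k) := by
  induction N with
  | zero => simp
  | succ N ih => simp [ascPochhammer_succ_right, ih, prod_range_succ]

section Rank

variable {α M R : Type*} [LinearOrder α] [CommMonoid M] [CommSemiring R]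

theorem prod_card_filter_lt (W : Finset α) (f : ℕ → M) :
    ∏ v ∈ W, f #{a ∈ W | a < v} = ∏ k ∈ range #W, f k := by
  induction W using Finset.induction_on_max with
  | empty => simp
  | insert b W hb ih =>
    have hbW : b ∉ W := fun h => lt_irrefl b (hb b h)
    rw [prod_insert hbW, card_insert_of_notMem hbW, prod_range_succ, mul_comm, ← ih]
    congr 1
    · refine prod_congr rfl fun v hv => congrArg f (congrArg card ?_)
      rw [filter_insert, if_neg (not_lt.2 (hb v hv).le)]
    · rw [filter_insert, if_neg (lt_irrefl b), filter_true_of_mem hb]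

theorem prod_ite_add_card_filter_lt {W : Finset α} {m : α} (hm : m ∈ W)
    (hmin : ∀ v ∈ W, m ≤ v) (x : R) :
    ∏ v ∈ W, ((if v = m then 1 else x) + #{a ∈ W | a < v}) =
      (ascPochhammer R (#W - 1)).eval (x + 1) := by
  set f : ℕ → R := fun k => if k = 0 then 1 else x + k with hf
  have hrank : ∀ v ∈ W,
      (if v = m then 1 else x) + #{a ∈ W | a < v} = f #{a ∈ W | a < v} := by
    intro v hv
    have h0 : #{a ∈ W | a < v} = 0 ↔ v = m := by
      rw [card_eq_zero, filter_eq_empty_iff]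
      exact ⟨fun h => le_antisymm (not_lt.1 (h hm)) (hmin v hv),
        fun h a ha => h ▸ not_lt.2 (hmin a ha)⟩
    by_cases hvm : v = m
    · simp only [hf, if_pos hvm, h0.2 hvm, Nat.cast_zero, add_zero, if_true]
    · simp only [hf, if_neg hvm, if_neg (mt h0.1 hvm)]
  obtain ⟨N, hN⟩ : ∃ N, #W = N + 1 := Nat.exists_eq_add_one.2 (card_pos.2 ⟨m, hm⟩)
  rw [prod_congr rfl hrank, prod_card_filter_lt, hN, prod_range_succ',
    ascPochhammer_eval_eq_prod_range, Nat.add_sub_cancel]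
  simp only [hf, if_pos, Nat.succ_ne_zero, if_false, mul_one, Nat.cast_succ]
  exact prod_congr rfl fun k _ => by ring

end Rank

section Ordered

variable {α R : Type*} [LinearOrder α] [CommSemiring R]

theorem mem_sources_of_forall_le {V : Finset α} {A : Finset (α × α)} {m : α}
    (hA : A ∈ parentSets V fun v => V.filter (· < v)) (hm : m ∈ V)
    (hmin : ∀ v ∈ V, m ≤ v) :
    m ∈ sources V A := by
  refine mem_sources.2 ⟨hm, fun p hp hpm => ?_⟩
  obtain ⟨-, hp⟩ := (mem_parentSets.1 hA).1 p hp
  obtain ⟨hp1, hlt⟩ := mem_filter.1 hp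
  exact absurd (hmin _ hp1) (not_le.2 (hpm ▸ hlt))

theorem sum_parentSets_lt_ite {V E : Finset α} {m : α} (hE : E ⊆ V) (hm : m ∈ V)
    (hmin : ∀ v ∈ V, m ≤ v) (hmE : m ∉ E) (ok : α × α → Prop) [DecidablePred ok]
    (hok : ∀ a, ∀ v ∉ E, ok (a, v) ↔ a ∉ E) (x : R) :
    ∑ A ∈ parentSets V (fun v => V.filter (· < v)),
        (if (∀ p ∈ A, ok p) ∧ Disjoint E (sources V A) then x ^ (#(sources V A) - 1) else 0) =
      (∏ v ∈ E, (#{a ∈ V | a < v ∧ ok (a, v)} : R)) *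
        (ascPochhammer R (#V - #E - 1)).eval (x + 1) := by
  have hWmin : ∀ v ∈ V \ E, m ≤ v := fun v hv => hmin v (mem_sdiff.1 hv).1
  rw [← card_sdiff_of_subset hE, ← prod_ite_add_card_filter_lt (mem_sdiff.2 ⟨hm, hmE⟩) hWmin,
    ← sum_congr rfl fun A hA =>
      prod_ite_mul_prod_sources (mem_sources_of_forall_le hA hm hmin) hmE ok x,
    sum_parentSets_prod_mul_prod_sources, ← prod_sdiff hE, mul_comm]
  congr 1
  · refine prod_congr rfl fun v hv => ?_
    rw [if_pos hv, zero_add, sum_boole, filter_filter]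
  · refine prod_congr rfl fun v hv => ?_
    obtain ⟨-, hvE⟩ := mem_sdiff.1 hv
    rw [if_neg hvE, sum_boole, filter_filter]
    congr 3
    ext a
    simp only [mem_filter, mem_sdiff, hok a v hvE]
    tauto

end Ordered

def IsSignedSet (n : ℕ) (V : Finset ℤ) : Prop :=
  (∀ v ∈ V, 1 ≤ |v| ∧ |v| ≤ (n : ℤ)) ∧
    ∀ j ∈ Icc (1 : ℤ) n, (j ∈ V ∧ -j ∉ V) ∨ (-j ∈ V ∧ j ∉ V)

noncomputable def signedSets (n : ℕ) : Finset (Finset ℤ) :=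
  (Icc (-(n : ℤ)) n).powerset.filter (IsSignedSet n)

noncomputable def signedSet (n : ℕ) (P : Finset ℤ) : Finset ℤ :=
  P ∪ (Icc 1 (n : ℤ) \ P).image Neg.neg

section SignedSets

variable {n : ℕ} {V P : Finset ℤ}

theorem mem_signedSet {z : ℤ} :
    z ∈ signedSet n P ↔ z ∈ P ∨ -z ∈ Icc 1 (n : ℤ) \ P := by
  simp only [signedSet, mem_union, mem_image]
  refine or_congr_right ⟨?_, fun h => ⟨-z, h, neg_neg z⟩⟩
  rintro ⟨j, hj, rfl⟩
  rwa [neg_neg]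

theorem IsSignedSet.mem_or_neg_mem (hV : IsSignedSet n V) {z : ℤ} (hz : z ∈ V) :
    (1 ≤ z ∧ z ≤ n) ∨ (1 ≤ -z ∧ -z ≤ n) := by
  have := hV.1 z hz
  rcases abs_cases z with ⟨h, _⟩ | ⟨h, _⟩ <;> rw [h] at this <;> omega

theorem IsSignedSet.neg_notMem (hV : IsSignedSet n V) {z : ℤ} (hz : z ∈ V) : -z ∉ V := by
  rcases hV.mem_or_neg_mem hz with h | h
  · rcases hV.2 z (mem_Icc.2 h) with h' | h'
    · exact h'.2
    · exact absurd hz h'.2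
  · rcases hV.2 (-z) (mem_Icc.2 h) with h' | h'
    · exact absurd (by rwa [neg_neg]) h'.2
    · exact h'.2

theorem mem_signedSets : V ∈ signedSets n ↔ IsSignedSet n V := by
  refine mem_filter.trans (and_iff_right_of_imp fun hV => mem_powerset.2 fun z hz => ?_)
  rcases hV.mem_or_neg_mem hz with h | h <;> exact mem_Icc.2 (by omega)

theorem isSignedSet_signedSet (hP : P ⊆ Icc 1 (n : ℤ)) : IsSignedSet n (signedSet n P) := by
  have hP' : ∀ z ∈ P, 1 ≤ z ∧ z ≤ n := fun z hz => mem_Icc.1 (hP hz)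
  refine ⟨fun v hv => ?_, fun j hj => ?_⟩
  · rw [mem_signedSet, mem_sdiff, mem_Icc] at hv
    rcases hv with h | h
    · have := hP' v h
      rw [abs_of_pos (by omega)]; omega
    · rw [abs_of_neg (by omega)]; omega
  · rw [mem_Icc] at hj
    simp only [mem_signedSet, mem_sdiff, mem_Icc, neg_neg]
    by_cases hjP : j ∈ P
    · refine Or.inl ⟨Or.inl hjP, fun h => h.elim (fun h => ?_) (fun h => h.2 hjP)⟩
      linarith [hP' _ h]
    · exact Or.inr ⟨Or.inr ⟨hj, hjP⟩, fun h => h.elim hjP (fun h => by omega)⟩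

theorem filter_pos_signedSet (hP : P ⊆ Icc 1 (n : ℤ)) :
    (signedSet n P).filter (0 < ·) = P := by
  ext z
  simp only [mem_filter, mem_signedSet, mem_sdiff, mem_Icc]
  constructor
  · rintro ⟨h | h, hz⟩
    · exact h
    · omega
  · intro h
    exact ⟨Or.inl h, by linarith [(mem_Icc.1 (hP h)).1]⟩

theorem IsSignedSet.signedSet_filter_pos (hV : IsSignedSet n V) :
    signedSet n (V.filter (0 < ·)) = V := by
  ext z
  simp only [mem_signedSet, mem_filter, mem_sdiff, mem_Icc]
  constructor
  · rintro (h | ⟨h1, h2⟩)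
    · exact h.1
    · rcases hV.2 (-z) (mem_Icc.2 h1) with h | h
      · exact absurd ⟨h.1, by omega⟩ h2
      · simpa using h.1
  · intro hz
    rcases hV.mem_or_neg_mem hz with h | h
    · exact Or.inl ⟨hz, by omega⟩
    · refine Or.inr ⟨h, fun h' => ?_⟩
      rcases hV.2 (-z) (mem_Icc.2 h) with h'' | h''
      · exact h''.2 (by simpa using hz)
      · exact h''.2 h'.1

theorem card_filter_superset_signedSets {K : Finset ℤ} (hK : K ⊆ Icc 1 (n : ℤ)) :
    #{V ∈ signedSets n | K ⊆ V} = 2 ^ (n - #K) := by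
  have hcard : 2 ^ (n - #K) = #(Finset.Icc K (Icc 1 (n : ℤ))) := by
    rw [card_Icc_finset hK, Int.card_Icc, add_sub_cancel_right, Int.toNat_natCast]
  rw [hcard]
  refine card_nbij' (fun V => V.filter (0 < ·)) (signedSet n) (fun V hV => ?_) (fun P hP => ?_)
    (fun V hV => ?_) (fun P hP => ?_)
  · obtain ⟨hV, hKV⟩ := mem_filter.1 hV
    have hV := mem_signedSets.1 hV
    refine Finset.mem_Icc.2 ⟨fun z hz => mem_filter.2 ⟨hKV hz, ?_⟩, fun z hz => ?_⟩
    · linarith [(mem_Icc.1 (hK hz)).1]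
    · obtain ⟨hz, hpos⟩ := mem_filter.1 hz
      rcases hV.mem_or_neg_mem hz with h | h <;> exact mem_Icc.2 (by omega)
  · obtain ⟨hKP, hP⟩ := Finset.mem_Icc.1 hP
    exact mem_filter.2 ⟨mem_signedSets.2 (isSignedSet_signedSet hP),
      hKP.trans subset_union_left⟩
  · exact (mem_signedSets.1 (mem_filter.1 hV).1).signedSet_filter_pos
  · exact filter_pos_signedSet (Finset.mem_Icc.1 hP).2

theorem IsSignedSet.card_filter_abs_le (hV : IsSignedSet n V) {B : ℤ} (hB0 : 0 ≤ B)
    (hB : B ≤ n) : (#{a ∈ V | |a| ≤ B} : ℤ) = B := by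
  have hcard : #{a ∈ V | |a| ≤ B} = #(Icc 1 B) := by
    refine card_nbij (|·|) (fun a ha => ?_) (fun a ha b hb hab => ?_) (fun k hk => ?_)
    · obtain ⟨ha, haB⟩ := mem_filter.1 ha
      exact mem_Icc.2 ⟨(hV.1 a ha).1, haB⟩
    · obtain ⟨ha, -⟩ := mem_filter.1 ha
      obtain ⟨hb, -⟩ := mem_filter.1 hb
      rcases abs_eq_abs.1 hab with h | h
      · exact h
      · exact absurd (by rwa [h, neg_neg]) (hV.neg_notMem ha)
    · obtain ⟨hk1, hkB⟩ := mem_Icc.1 hk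
      rcases hV.2 k (mem_Icc.2 ⟨hk1, hkB.trans hB⟩) with h | h
      · have hk : |k| = k := abs_of_pos (by omega)
        exact ⟨k, mem_filter.2 ⟨h.1, hk.symm ▸ hkB⟩, hk⟩
      · have hk : |-k| = k := by rw [abs_neg, abs_of_pos (by omega)]
        exact ⟨-k, mem_filter.2 ⟨h.1, hk.symm ▸ hkB⟩, hk⟩
  rw [hcard, Int.card_Icc, add_sub_cancel_right, Int.toNat_of_nonneg hB0]

theorem IsSignedSet.card_eq (hV : IsSignedSet n V) : #V = n := by
  have h := hV.card_filter_abs_le (Nat.cast_nonneg n) le_rfl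
  rwa [filter_true_of_mem fun a ha => (hV.1 a ha).2, Nat.cast_inj] at h

theorem isLPB_iff {A : Finset (ℤ × ℤ)} :
    IsLPB n V A ↔ IsSignedSet n V ∧ A ∈ parentSets V fun v => V.filter (· < v) := by
  simp only [IsLPB, IsSignedSet, mem_parentSets, mem_filter, and_assoc]
  exact Iff.rfl.and (Iff.rfl.and ((forall₂_congr fun _ _ => and_left_comm).and Iff.rfl))

theorem mem_LPB {A : Finset (ℤ × ℤ)} :
    (V, A) ∈ LPB n ↔ IsSignedSet n V ∧ A ∈ parentSets V fun v => V.filter (· < v) := by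
  rw [LPB, mem_filter, ← isLPB_iff, and_iff_right_iff_imp]
  intro hA
  have hV : V ⊆ Icc (-(n : ℤ)) n :=
    mem_powerset.1 (mem_filter.1 (mem_signedSets.2 (isLPB_iff.1 hA).1)).1
  refine mem_product.2 ⟨mem_powerset.2 hV, mem_powerset.2 fun p hp => ?_⟩
  obtain ⟨h1, h2, -⟩ := hA.2.2.1 p hp
  exact mem_product.2 ⟨hV h1, hV h2⟩

end SignedSets

theorem isLegalDestB_iff {A : Finset (ℤ × ℤ)} (hA : ∀ p ∈ A, ∀ q ∈ A, p.2 = q.2 → p.1 = q.1)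
    {j : ℤ} :
    IsLegalDestB A j ↔ (∃ p ∈ A, p.2 = j) ∧ ∀ p ∈ A, p.1 ≠ j ∧ (p.2 = j → |p.1| < |j|) := by
  constructor
  · rintro ⟨⟨q, hq, hqj, hlt⟩, hno⟩
    refine ⟨⟨q, hq, hqj⟩, fun p hp => ⟨hno p hp, fun hpj => ?_⟩⟩
    rwa [hA p hp q hq (hpj.trans hqj.symm)]
  · rintro ⟨⟨q, hq, hqj⟩, h⟩
    exact ⟨⟨q, hq, hqj, (h q hq).2 hqj⟩, fun p hp => (h p hp).1⟩

def AllowedArc (i : ℤ) (E : Finset ℤ) (p : ℤ × ℤ) : Prop :=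
  p.1 ∉ E ∧ (p.2 ∈ E → |p.1| < |p.2| ∧ p ≠ (i - 1, i))

section LegalDestinations

variable {n : ℕ} {i : ℤ} {V E : Finset ℤ} {A : Finset (ℤ × ℤ)}

theorem forall_allowedArc_and_disjoint_iff (hA : A ∈ parentSets V fun v => V.filter (· < v))
    (hE : E ⊆ V) (hiE : i ∈ E) :
    ((∀ p ∈ A, AllowedArc i E p) ∧ Disjoint E (sources V A)) ↔
      (∀ v ∈ E, IsLegalDestB A v) ∧ (i - 1, i) ∉ A := by
  have huniq := (mem_parentSets.1 hA).2
  simp only [disjoint_sources_iff hE, isLegalDestB_iff huniq, AllowedArc]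
  constructor
  · rintro ⟨hok, hpar⟩
    refine ⟨fun v hv => ⟨hpar v hv, fun p hp => ⟨fun h => (hok p hp).1 (h ▸ hv), fun h => ?_⟩⟩,
      fun h => ((hok _ h).2 hiE).2 rfl⟩
    exact h ▸ ((hok p hp).2 (h ▸ hv)).1
  · rintro ⟨hdest, hA⟩
    refine ⟨fun p hp => ⟨fun h => ((hdest _ h).2 p hp).1 rfl, fun h => ?_⟩,
      fun v hv => (hdest v hv).1⟩
    exact ⟨((hdest _ h).2 p hp).2 rfl, fun h => hA (h ▸ hp)⟩

theorem IsSignedSet.card_filter_allowedArc (hV : IsSignedSet n V) (hi : 2 ≤ i) (hin : i ≤ n)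
    (hi1V : i - 1 ∈ V) (hE : E ⊆ {i, i - 1}) {v : ℤ} (hv : v ∈ E) :
    (#{a ∈ V | a < v ∧ AllowedArc i E (a, v)} : ℤ) = i - 2 := by
  have hneg := hV.neg_notMem hi1V
  have hEi : ∀ a ∈ E, a = i ∨ a = i - 1 := fun a ha => by simpa using hE ha
  rw [← hV.card_filter_abs_le (B := i - 2) (by omega) (by omega)]
  congr 2
  refine filter_congr fun a ha => ?_
  have hvi := hEi v hv
  have hav : |v| = v := abs_of_pos (by omega)
  simp only [AllowedArc, hv, true_imp_iff, hav, ne_eq, Prod.mk.injEq]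
  constructor
  · rintro ⟨-, -, hlt, hne⟩
    rcases abs_cases a with ⟨h, -⟩ | ⟨h, -⟩
    · omega
    · have : a ≠ -(i - 1) := fun h' => hneg (h' ▸ ha)
      omega
  · intro h
    obtain ⟨h1, h2⟩ := abs_le.1 h
    refine ⟨by omega, fun h' => ?_, h.trans_lt (by omega), by omega⟩
    rcases hEi a h' with h'' | h'' <;> omega

theorem IsSignedSet.three_le_of_allowedArc (hV : IsSignedSet n V) (hi : 2 ≤ i) (hin : i ≤ n)
    (hi1V : i - 1 ∈ V) (hEV : E ⊆ V) (hE : E ⊆ {i, i - 1}) (hiE : i ∈ E)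
    (hA : A ∈ parentSets V fun v => V.filter (· < v))
    (hgood : (∀ p ∈ A, AllowedArc i E p) ∧ Disjoint E (sources V A)) : 3 ≤ i := by
  obtain ⟨p, hp, hpi⟩ := (disjoint_sources_iff hEV).1 hgood.2 i hiE
  have hmem : p.1 ∈ V.filter fun a => a < i ∧ AllowedArc i E (a, i) := by
    obtain ⟨-, hp1⟩ := (mem_parentSets.1 hA).1 p hp
    obtain ⟨hp1, hlt⟩ := mem_filter.1 hp1
    refine mem_filter.2 ⟨hp1, hpi ▸ hlt, ?_⟩
    simpa [← hpi] using hgood.1 p hp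
  have := hV.card_filter_allowedArc hi hin hi1V hE hiE
  have := card_pos.2 ⟨_, hmem⟩
  omega

theorem IsSignedSet.sum_ite_allowedArc (hV : IsSignedSet n V) (hi : 2 ≤ i) (hin : i ≤ n)
    (hi1V : i - 1 ∈ V) (hEV : E ⊆ V) (hE : E ⊆ {i, i - 1}) (hiE : i ∈ E) (x : ℤ) :
    ∑ A ∈ parentSets V (fun v => V.filter (· < v)),
        (if (∀ p ∈ A, AllowedArc i E p) ∧ Disjoint E (sources V A)
          then x ^ (#(sources V A) - 1) else 0) =
      (i - 2) ^ #E * (ascPochhammer ℤ (n - #E - 1)).eval (x + 1) := by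
  rcases hi.eq_or_lt with rfl | hi3
  · rw [sub_self, zero_pow (card_ne_zero.2 ⟨_, hiE⟩), zero_mul]
    refine sum_eq_zero fun A hA => if_neg fun hgood => ?_
    have := hV.three_le_of_allowedArc hi hin hi1V hEV hE hiE hA hgood
    omega
  have hne : V.Nonempty := ⟨_, hi1V⟩
  have hm1 : V.min' hne ≤ 1 := by
    rcases hV.2 1 (mem_Icc.2 ⟨le_rfl, by omega⟩) with h | h
    · exact min'_le V 1 h.1
    · exact (min'_le V (-1) h.1).trans (by norm_num)
  have hmE : V.min' hne ∉ E := fun h => by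
    have := hE h
    simp only [mem_insert, mem_singleton] at this
    omega
  rw [sum_parentSets_lt_ite hEV (min'_mem V hne) (fun v hv => min'_le V v hv) hmE _
      (fun a v hv => by simp [AllowedArc, hv]),
    prod_congr rfl fun v hv => hV.card_filter_allowedArc hi hin hi1V hE hv, prod_const,
    hV.card_eq]

theorem IsSignedSet.sum_filter_isLegalDestB (hV : IsSignedSet n V) (hi : 2 ≤ i) (hin : i ≤ n)
    (hEV : {i, i - 1} ⊆ V) (x : ℤ) :
    ∑ A ∈ (parentSets V fun v => V.filter (· < v)).filter
        (fun A => IsLegalDestB A i ∧ ¬IsLegalDestB A (i - 1) ∧ (i - 1, i) ∉ A),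
      x ^ (osB V A - 1) =
    (i - 2) * (ascPochhammer ℤ (n - 2)).eval (x + 1) -
      (i - 2) ^ 2 * (ascPochhammer ℤ (n - 3)).eval (x + 1) := by
  have hiV : i ∈ V := hEV (mem_insert_self _ _)
  have hi1V : i - 1 ∈ V := hEV (mem_insert_of_mem (mem_singleton_self _))
  have hsplit : ∀ A ∈ parentSets V (fun v => V.filter (· < v)),
      (if IsLegalDestB A i ∧ ¬IsLegalDestB A (i - 1) ∧ (i - 1, i) ∉ A
        then x ^ (osB V A - 1) else 0) =
      (if (∀ p ∈ A, AllowedArc i {i} p) ∧ Disjoint {i} (sources V A)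
        then x ^ (#(sources V A) - 1) else 0) -
      (if (∀ p ∈ A, AllowedArc i {i, i - 1} p) ∧ Disjoint {i, i - 1} (sources V A)
        then x ^ (#(sources V A) - 1) else 0) := fun A hA => by
    simp only [forall_allowedArc_and_disjoint_iff hA (singleton_subset_iff.2 hiV)
        (mem_singleton_self i), forall_allowedArc_and_disjoint_iff hA hEV (mem_insert_self _ _),
      forall_mem_insert, mem_singleton, forall_eq]
    by_cases h1 : IsLegalDestB A i <;> by_cases h2 : IsLegalDestB A (i - 1) <;>
      by_cases h3 : (i - 1, i) ∈ A <;> simp [h1, h2, h3, osB, sources]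
  have hcard : #({i, i - 1} : Finset ℤ) = 2 := card_pair (by omega)
  rw [sum_filter, sum_congr rfl hsplit, sum_sub_distrib,
    hV.sum_ite_allowedArc hi hin hi1V (singleton_subset_iff.2 hiV) (by simp)
      (mem_singleton_self i),
    hV.sum_ite_allowedArc hi hin hi1V hEV subset_rfl (mem_insert_self _ _), hcard,
    card_singleton, pow_one, Nat.sub_sub, Nat.sub_sub]

end LegalDestinations

theorem mem_filter_LPB_iff {n : ℕ} {i : ℤ} {T : Finset ℤ × Finset (ℤ × ℤ)} :
    T ∈ (LPB n).filter (fun T => IsLegalDestB T.2 i ∧ i - 1 ∈ T.1 ∧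
        ¬IsLegalDestB T.2 (i - 1) ∧ (i - 1, i) ∉ T.2 ∧ (-i, i - 1) ∉ T.2) ↔
      T.1 ∈ (signedSets n).filter ({i, i - 1} ⊆ ·) ∧
        T.2 ∈ (parentSets T.1 fun v => T.1.filter (· < v)).filter
          (fun A => IsLegalDestB A i ∧ ¬IsLegalDestB A (i - 1) ∧ (i - 1, i) ∉ A) := by
  obtain ⟨V, A⟩ := T
  simp only [mem_filter, mem_LPB, mem_signedSets, insert_subset_iff, singleton_subset_iff]
  constructor
  · rintro ⟨⟨hV, hA⟩, hi, hi1, hni1, h1, -⟩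
    obtain ⟨p, hp, hpi, -⟩ := hi.1
    have hiV : i ∈ V := hpi ▸ ((mem_parentSets.1 hA).1 p hp).1
    exact ⟨⟨hV, hiV, hi1⟩, hA, hi, hni1, h1⟩
  · rintro ⟨⟨hV, hiV, hi1⟩, hA, hi, hni1, h1⟩
    refine ⟨⟨hV, hA⟩, hi, hi1, hni1, h1, fun h => ?_⟩
    exact hV.neg_notMem hiV (mem_filter.1 ((mem_parentSets.1 hA).1 _ h).2).1

theorem sum_filter_LPB_eq_sum_sum {M : Type*} [AddCommMonoid M] (n : ℕ) (i : ℤ)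
    (f : Finset ℤ × Finset (ℤ × ℤ) → M) :
    ∑ T ∈ (LPB n).filter (fun T => IsLegalDestB T.2 i ∧ i - 1 ∈ T.1 ∧
        ¬IsLegalDestB T.2 (i - 1) ∧ (i - 1, i) ∉ T.2 ∧ (-i, i - 1) ∉ T.2), f T =
      ∑ V ∈ (signedSets n).filter ({i, i - 1} ⊆ ·),
        ∑ A ∈ (parentSets V fun v => V.filter (· < v)).filter
          (fun A => IsLegalDestB A i ∧ ¬IsLegalDestB A (i - 1) ∧ (i - 1, i) ∉ A), f (V, A) :=
  sum_finset_product _ _ _ fun _ => mem_filter_LPB_iff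

theorem lpb_Y_enumeration_general (n i : ℕ) (hi : 2 ≤ i) (hin : i ≤ n)
    (x : ℤ) :
    ∑ T ∈ (LPB n).filter (fun T => IsLegalDestB T.2 (i : ℤ) ∧
        ((i : ℤ) - 1) ∈ T.1 ∧ ¬ IsLegalDestB T.2 ((i : ℤ) - 1) ∧
        ((i : ℤ) - 1, (i : ℤ)) ∉ T.2 ∧ (-(i : ℤ), (i : ℤ) - 1) ∉ T.2),
      x ^ (osB T.1 T.2 - 1) =
    ((i : ℤ) - 2) * 2 ^ (n - 2) * (ascPochhammer ℤ (n - 2)).eval (x + 1) -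
      ((i : ℤ) - 2) ^ 2 * 2 ^ (n - 2) *
        (ascPochhammer ℤ (n - 3)).eval (x + 1) := by
  have hi' : (2 : ℤ) ≤ i := by exact_mod_cast hi
  have hin' : (i : ℤ) ≤ n := by exact_mod_cast hin
  have hpair : {(i : ℤ), (i : ℤ) - 1} ⊆ Icc 1 (n : ℤ) := by
    simp only [insert_subset_iff, singleton_subset_iff, mem_Icc]
    omega
  rw [sum_filter_LPB_eq_sum_sum, sum_congr rfl fun V hV =>
      (mem_signedSets.1 (mem_filter.1 hV).1).sum_filter_isLegalDestB hi' hin'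
        (mem_filter.1 hV).2 x,
    sum_const, card_filter_superset_signedSets hpair, card_pair (by omega), nsmul_eq_mul]
  push_cast
  ring

/-- for `2 ≤ i ≤ n`, summing over type B linked partitions
in which `i` is a legal destination, `i-1` is a vertex which is not a legal
destination, and neither `(i-1, i)` nor `(-i, i-1)` is an arc,
`∑ x^{os τ - 1} = (i-2) 2^{n-2}(x+1)_{n-2} - (i-2)² 2^{n-2}(x+1)_{n-3}`. -/
theorem lpb_Y_enumeration (n i : ℕ) (hn : 2 ≤ n) (hi : 2 ≤ i) (hin : i ≤ n)
    (x : ℤ) :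
    ∑ T ∈ (LPB n).filter (fun T => IsLegalDestB T.2 (i : ℤ) ∧
        ((i : ℤ) - 1) ∈ T.1 ∧ ¬ IsLegalDestB T.2 ((i : ℤ) - 1) ∧
        ((i : ℤ) - 1, (i : ℤ)) ∉ T.2 ∧ (-(i : ℤ), (i : ℤ) - 1) ∉ T.2),
      x ^ (osB T.1 T.2 - 1) =
    ((i : ℤ) - 2) * 2 ^ (n - 2) * (ascPochhammer ℤ (n - 2)).eval (x + 1) -
      ((i : ℤ) - 2) ^ 2 * 2 ^ (n - 2) *
        (ascPochhammer ℤ (n - 3)).eval (x + 1) :=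
  lpb_Y_enumeration_general n i hi hin x
end

section
/- For every n ≥ 1, the number of type B linked partitions of {1,...,n} that contain the vertex -1, weighted by x^{os(τ)-1}, equals 2^{n-1} (x+1)_{n-1}. -/
open Finset Polynomial
open scoped Classical

/-! ### Auxiliary material for the proof -/

/-- admissible vertex sets containing `-1` -/
noncomputable def Vset (n : ℕ) : Finset (Finset ℤ) :=
  (Finset.Icc (-(n : ℤ)) (n : ℤ)).powerset.filter
    (fun V => (∀ v ∈ V, 1 ≤ |v| ∧ |v| ≤ (n : ℤ)) ∧
      (∀ i ∈ Finset.Icc (1 : ℤ) (n : ℤ), ((i ∈ V ∧ -i ∉ V) ∨ (-i ∈ V ∧ i ∉ V))) ∧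
      (-1 : ℤ) ∈ V)

/-- admissible arc sets on a vertex set `V` -/
noncomputable def arcSet (V : Finset ℤ) : Finset (Finset (ℤ × ℤ)) :=
  (V ×ˢ V).powerset.filter
    (fun A => (∀ p ∈ A, p.1 < p.2) ∧ ∀ p ∈ A, ∀ q ∈ A, p.2 = q.2 → p.1 = q.1)

lemma mem_arcSet {V : Finset ℤ} {A : Finset (ℤ × ℤ)} :
    A ∈ arcSet V ↔ (∀ p ∈ A, p.1 ∈ V ∧ p.2 ∈ V ∧ p.1 < p.2) ∧
      ∀ p ∈ A, ∀ q ∈ A, p.2 = q.2 → p.1 = q.1 := by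
  simp only [arcSet, Finset.mem_filter, Finset.mem_powerset]
  constructor
  · rintro ⟨h0, h1, h2⟩
    exact ⟨fun p hp => ⟨(Finset.mem_product.1 (h0 hp)).1,
      (Finset.mem_product.1 (h0 hp)).2, h1 p hp⟩, h2⟩
  · rintro ⟨h1, h2⟩
    exact ⟨fun p hp => Finset.mem_product.2 ⟨(h1 p hp).1, (h1 p hp).2.1⟩,
      fun p hp => (h1 p hp).2.2, h2⟩

lemma mem_split (n : ℕ) (T : Finset ℤ × Finset (ℤ × ℤ)) :
    T ∈ (LPB n).filter (fun T => (-1 : ℤ) ∈ T.1) ↔ T.1 ∈ Vset n ∧ T.2 ∈ arcSet T.1 := by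
  simp only [LPB, Finset.mem_filter, Finset.mem_powerset, Finset.mem_product]
  simp only [Vset, IsLPB, Finset.mem_filter, Finset.mem_powerset, Finset.mem_product,
    mem_arcSet]
  constructor
  · rintro ⟨⟨⟨hV, _⟩, h1, h2, h3, h4⟩, hm⟩
    exact ⟨⟨hV, h1, h2, hm⟩, h3, h4⟩
  · rintro ⟨⟨hV, h1, h2, hm⟩, h3, h4⟩
    refine ⟨⟨⟨hV, ?_⟩, h1, h2, h3, h4⟩, hm⟩
    intro p hp
    have h := h3 p hp
    exact Finset.mem_product.2 ⟨hV h.1, hV h.2.1⟩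

lemma osB_pos {V : Finset ℤ} (hV : V.Nonempty) {A : Finset (ℤ × ℤ)} (hA : A ∈ arcSet V) :
    1 ≤ osB V A := by
  rw [mem_arcSet] at hA
  have hmin : V.min' hV ∈ V.filter (fun v => ∀ p ∈ A, p.2 ≠ v) := by
    refine Finset.mem_filter.2 ⟨V.min'_mem hV, fun p hp hpe => ?_⟩
    have h1 := hA.1 p hp
    have h2 := V.min'_le _ h1.1
    omega
  exact Finset.card_pos.2 ⟨_, hmin⟩

lemma osB_eq (V : Finset ℤ) (A : Finset (ℤ × ℤ)) :
    osB V A = (V.filter (fun v => ∀ p ∈ A, p.2 ≠ v)).card := by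
  unfold osB
  congr 1

lemma arcSum (x : ℤ) : ∀ V : Finset ℤ, V.Nonempty →
    ∑ A ∈ arcSet V, x ^ (osB V A - 1) =
      ∏ i ∈ Finset.range (V.card - 1), (x + (i : ℤ) + 1) := by
  intro V
  induction V using Finset.strongInduction with
  | _ V ih =>
    intro hV
    have hmV : V.max' hV ∈ V := V.max'_mem hV
    set m := V.max' hV with hm
    by_cases hV' : (V.erase m).Nonempty
    · set V' := V.erase m with hV'def
      have hmV' : m ∉ V' := Finset.notMem_erase m V
      have hins : insert m V' = V := Finset.insert_erase hmV
      have hlt : ∀ u ∈ V', u < m := fun u hu =>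
        lt_of_le_of_ne (V.le_max' u (Finset.mem_of_mem_erase hu)) (Finset.ne_of_mem_erase hu)
      have hsub : V' ⊂ V := Finset.erase_ssubset hmV
      have hfilter : ∀ A ∈ arcSet V, A.filter (fun p => p.2 ≠ m) ∈ arcSet V' := by
        intro A hA
        rw [mem_arcSet] at hA ⊢
        refine ⟨fun p hp => ?_, fun p hp q hq => hA.2 p (Finset.mem_of_mem_filter p hp) q
          (Finset.mem_of_mem_filter q hq)⟩
        have hp2 := (Finset.mem_filter.1 hp).2
        have h := hA.1 p (Finset.mem_of_mem_filter p hp)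
        have hle := V.le_max' p.2 h.2.1
        refine ⟨Finset.mem_erase.2 ⟨by omega, h.1⟩, Finset.mem_erase.2 ⟨hp2, h.2.1⟩, h.2.2⟩
      -- the bijection
      have hbij : ∑ A ∈ arcSet V, x ^ (osB V A - 1) =
          ∑ q ∈ arcSet V' ×ˢ insert m V',
            x ^ (osB V' q.1 - 1) * (if q.2 = m then x else 1) := by
        apply Finset.sum_nbij'
          (i := fun A => (A.filter (fun p => p.2 ≠ m),
            if h : ∃ u, (u, m) ∈ A then h.choose else m))
          (j := fun q => if q.2 = m then q.1 else insert (q.2, m) q.1)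
        · intro A hA
          refine Finset.mem_product.2 ⟨hfilter A hA, ?_⟩
          split
          · rename_i h
            have hc := h.choose_spec
            rw [mem_arcSet] at hA
            have h1 := hA.1 _ hc
            have hle := V.le_max' _ h1.1
            exact Finset.mem_insert.2 (Or.inr (Finset.mem_erase.2 ⟨by simp at h1 ⊢; omega, h1.1⟩))
          · exact Finset.mem_insert_self _ _
        · intro q hq
          obtain ⟨hq1, hq2⟩ := Finset.mem_product.1 hq
          rw [mem_arcSet] at hq1
          by_cases hqm : q.2 = m
          · simp only [if_pos hqm]
            rw [mem_arcSet]
            exact ⟨fun p hp => ⟨Finset.mem_of_mem_erase (hq1.1 p hp).1,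
              Finset.mem_of_mem_erase (hq1.1 p hp).2.1, (hq1.1 p hp).2.2⟩, hq1.2⟩
          · simp only [if_neg hqm]
            have hq2' : q.2 ∈ V' := (Finset.mem_insert.1 hq2).resolve_left hqm
            rw [mem_arcSet]
            constructor
            · intro p hp
              rcases Finset.mem_insert.1 hp with rfl | hp'
              · exact ⟨Finset.mem_of_mem_erase hq2', hmV, hlt _ hq2'⟩
              · exact ⟨Finset.mem_of_mem_erase (hq1.1 p hp').1,
                  Finset.mem_of_mem_erase (hq1.1 p hp').2.1, (hq1.1 p hp').2.2⟩
            · intro p hp p' hp' hpe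
              rcases Finset.mem_insert.1 hp with rfl | hp <;>
                rcases Finset.mem_insert.1 hp' with h' | h'
              · rw [h']
              · exfalso
                have := (hq1.1 p' h').2.1
                rw [← hpe] at this
                exact hmV' this
              · exfalso
                have := (hq1.1 p hp).2.1
                rw [hpe, h'] at this
                exact hmV' this
              · exact hq1.2 p hp p' h' hpe
        · -- left inverse
          intro A hA
          rw [mem_arcSet] at hA
          by_cases h : ∃ u, (u, m) ∈ A
          · have hc := h.choose_spec
            have hcm : h.choose ≠ m := by
              have := (hA.1 _ hc).2.2
              simp only at this; omega
            simp only [dif_pos h, if_neg hcm]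
            ext p
            simp only [Finset.mem_insert, Finset.mem_filter]
            constructor
            · rintro (rfl | ⟨hp, _⟩)
              · exact hc
              · exact hp
            · intro hp
              by_cases hpm : p.2 = m
              · left
                have h1 : p.1 = h.choose := hA.2 p hp _ hc (by rw [hpm])
                exact Prod.ext h1 hpm
              · exact Or.inr ⟨hp, hpm⟩
          · have hfe : A.filter (fun p => p.2 ≠ m) = A := by
              refine Finset.filter_eq_self.2 (fun p hp hpm => h ⟨p.1, ?_⟩)
              rwa [show (p.1, m) = p from Prod.ext rfl hpm.symm]
            simp [dif_neg h, hfe]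
        · -- right inverse
          intro q hq
          obtain ⟨hq1, hq2⟩ := Finset.mem_product.1 hq
          rw [mem_arcSet] at hq1
          have htne : ∀ p ∈ q.1, p.2 ≠ m := fun p hp =>
            Finset.ne_of_mem_erase (hq1.1 p hp).2.1
          by_cases hqm : q.2 = m
          · simp only [if_pos hqm]
            have h1 : q.1.filter (fun p => p.2 ≠ m) = q.1 := Finset.filter_eq_self.2 htne
            have h2 : ¬ ∃ u, (u, m) ∈ q.1 := by
              rintro ⟨u, hu⟩
              exact htne _ hu rfl
            rw [h1, dif_neg h2, ← hqm]
          · simp only [if_neg hqm]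
            have h2 : ∃ u, (u, m) ∈ insert (q.2, m) q.1 := ⟨q.2, Finset.mem_insert_self _ _⟩
            have hch : h2.choose = q.2 := by
              have hc := h2.choose_spec
              rcases Finset.mem_insert.1 hc with h' | h'
              · exact congrArg Prod.fst h'
              · exact absurd rfl (htne _ h')
            have h1 : (insert (q.2, m) q.1).filter (fun p => p.2 ≠ m) = q.1 := by
              rw [Finset.filter_insert]
              simp only [ne_eq, not_true_eq_false, if_neg, if_false]
              exact Finset.filter_eq_self.2 htne
            rw [dif_pos h2, h1, hch]
        · -- weights
          intro A hA
          have hA' := hfilter A hA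
          have hc1 : 1 ≤ osB V' (A.filter (fun p => p.2 ≠ m)) := osB_pos hV' hA'
          rw [mem_arcSet] at hA
          have hex_iff : (∃ u, (u, m) ∈ A) ↔ ¬ (∀ p ∈ A, p.2 ≠ m) := by
            constructor
            · rintro ⟨u, hu⟩ hall; exact hall _ hu rfl
            · intro hall
              push_neg at hall
              obtain ⟨p, hp, hpm⟩ := hall
              exact ⟨p.1, by rwa [show (p.1, m) = p from Prod.ext rfl hpm.symm]⟩
          by_cases hex : ∃ u, (u, m) ∈ A
          · have hosB : osB V A = osB V' (A.filter (fun p => p.2 ≠ m)) := by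
              rw [osB_eq, osB_eq]
              refine congrArg Finset.card ?_
              ext v
              simp only [hV'def, Finset.mem_filter, Finset.mem_erase]
              constructor
              · rintro ⟨hv, hall⟩
                obtain ⟨u, hu⟩ := hex
                exact ⟨⟨fun hvm => hall _ hu hvm.symm, hv⟩, fun p hp => hall p hp.1⟩
              · rintro ⟨⟨hvm, hv⟩, hall⟩
                refine ⟨hv, fun p hp hpv => ?_⟩
                by_cases hpm : p.2 = m
                · exact hvm (by rw [← hpv, hpm])
                · exact hall p ⟨hp, hpm⟩ hpv
            have hcm : hex.choose ≠ m := by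
              have := (hA.1 _ hex.choose_spec).2.2
              simp only at this; omega
            rw [hosB]
            simp only [dif_pos hex, if_neg hcm, mul_one]
          · have hP : ∀ p ∈ A, p.2 ≠ m := by
              by_contra hP; exact hex (hex_iff.2 hP)
            have hosB : osB V A = osB V' (A.filter (fun p => p.2 ≠ m)) + 1 := by
              rw [osB_eq, osB_eq]
              have hmX : m ∈ V.filter (fun v => ∀ p ∈ A, p.2 ≠ v) :=
                Finset.mem_filter.2 ⟨hmV, hP⟩
              rw [← Finset.card_erase_add_one hmX]
              refine congrArg (· + 1) (congrArg Finset.card ?_)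
              ext v
              simp only [hV'def, Finset.mem_erase, Finset.mem_filter]
              constructor
              · rintro ⟨hvm, hv, hall⟩
                exact ⟨⟨hvm, hv⟩, fun p hp => hall p hp.1⟩
              · rintro ⟨⟨hvm, hv⟩, hall⟩
                refine ⟨hvm, hv, fun p hp hpv => ?_⟩
                by_cases hpm : p.2 = m
                · exact hvm (by rw [← hpv, hpm])
                · exact hall p ⟨hp, hpm⟩ hpv
            rw [hosB, Nat.add_sub_cancel]
            simp only [dif_neg hex, if_true]
            obtain ⟨k, hk⟩ : ∃ k, osB V' (A.filter (fun p => p.2 ≠ m)) = k + 1 :=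
              ⟨osB V' (A.filter (fun p => p.2 ≠ m)) - 1, by omega⟩
            rw [hk, Nat.add_sub_cancel, pow_succ]
      have hcol : ∀ A' ∈ arcSet V',
          ∑ w ∈ insert m V', x ^ (osB V' A' - 1) * (if w = m then x else 1) =
            x ^ (osB V' A' - 1) * (x + (V'.card : ℤ)) := by
        intro A' _
        rw [← Finset.mul_sum, Finset.sum_insert hmV', if_pos rfl]
        have h1 : ∑ w ∈ V', (if w = m then x else 1) = (V'.card : ℤ) := by
          rw [Finset.sum_congr rfl (fun w hw => if_neg (fun h : w = m => hmV' (h ▸ hw))),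
            Finset.sum_const, nsmul_eq_mul, mul_one]
        rw [h1]
      have hcard : V.card - 1 = V'.card := by
        rw [hV'def, Finset.card_erase_of_mem hmV]
      have hone : 1 ≤ V'.card := Finset.card_pos.2 hV'
      calc ∑ A ∈ arcSet V, x ^ (osB V A - 1)
          = ∑ q ∈ arcSet V' ×ˢ insert m V',
              x ^ (osB V' q.1 - 1) * (if q.2 = m then x else 1) := hbij
        _ = ∑ A' ∈ arcSet V', ∑ w ∈ insert m V',
              x ^ (osB V' A' - 1) * (if w = m then x else 1) := Finset.sum_product _ _ _
        _ = ∑ A' ∈ arcSet V', x ^ (osB V' A' - 1) * (x + (V'.card : ℤ)) :=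
              Finset.sum_congr rfl hcol
        _ = (∑ A' ∈ arcSet V', x ^ (osB V' A' - 1)) * (x + (V'.card : ℤ)) :=
              (Finset.sum_mul _ _ _).symm
        _ = (∏ i ∈ Finset.range (V'.card - 1), (x + (i : ℤ) + 1)) * (x + (V'.card : ℤ)) := by
              rw [ih V' hsub hV']
        _ = ∏ i ∈ Finset.range (V.card - 1), (x + (i : ℤ) + 1) := by
              rw [hcard]
              conv_rhs => rw [show V'.card = (V'.card - 1) + 1 from by omega,
                Finset.prod_range_succ]
              congr 1
              rw [Nat.cast_sub hone]
              push_cast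
              ring
    · -- V is a singleton
      have hVm : V = {m} := by
        rcases (Finset.erase_eq_empty_iff V m).1 (Finset.not_nonempty_iff_eq_empty.1 hV') with h | h
        · exact absurd h (Finset.nonempty_iff_ne_empty.1 hV)
        · exact h
      have harc : arcSet V = {∅} := by
        ext A
        simp only [Finset.mem_singleton]
        rw [mem_arcSet]
        constructor
        · rintro ⟨h1, _⟩
          by_contra hne
          obtain ⟨p, hp⟩ := Finset.nonempty_iff_ne_empty.2 hne
          have := h1 p hp
          rw [hVm] at this
          simp only [Finset.mem_singleton] at this
          omega
        · rintro rfl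
          simp
      rw [harc, hVm]
      simp [osB]

lemma Vset_nonempty {n : ℕ} {V : Finset ℤ} (hV : V ∈ Vset n) : V.Nonempty := by
  simp only [Vset, Finset.mem_filter] at hV
  exact ⟨-1, hV.2.2.2⟩

lemma Vset_card {n : ℕ} {V : Finset ℤ} (hV : V ∈ Vset n) : V.card = n := by
  simp only [Vset, Finset.mem_filter, Finset.mem_powerset] at hV
  obtain ⟨hsub, h1, h2, h3⟩ := hV
  have key : V.card = (Finset.Icc (1 : ℤ) (n : ℤ)).card := by
    apply Finset.card_nbij (i := fun v => |v|)
    · intro v hv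
      simp only [Finset.mem_coe, Finset.mem_Icc]
      exact (h1 v hv)
    · intro v hv w hw hvw
      simp only [Finset.mem_coe] at hv hw
      by_contra hne
      have h1v := h1 v hv
      have h1w := h1 w hw
      have hvw2 : |v| = |w| := hvw
      have hvw' : v = -w := (abs_eq_abs.1 hvw2).resolve_left hne
      subst hvw'
      have hwmem : |w| ∈ Finset.Icc (1 : ℤ) (n : ℤ) := Finset.mem_Icc.2 h1w
      rcases abs_cases w with ⟨hw1, _⟩ | ⟨hw1, _⟩
      · rw [hw1] at hwmem
        rcases h2 _ hwmem with ⟨_, hb⟩ | ⟨_, hb⟩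
        · exact hb hv
        · exact hb hw
      · rw [hw1] at hwmem
        rcases h2 _ hwmem with ⟨_, hb⟩ | ⟨_, hb⟩
        · rw [neg_neg] at hb; exact hb hw
        · exact hb hv
    · intro i hi
      simp only [Finset.mem_coe, Set.mem_image]
      simp only [Finset.coe_Icc, Set.mem_Icc] at hi
      rcases h2 i (Finset.mem_Icc.2 hi) with ⟨ha, _⟩ | ⟨ha, _⟩
      · exact ⟨i, ha, abs_of_pos (by omega)⟩
      · exact ⟨-i, ha, by rw [abs_neg]; exact abs_of_pos (by omega)⟩
  rw [key, Int.card_Icc]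
  omega

lemma Vset_card_eq (n : ℕ) (hn : 1 ≤ n) : (Vset n).card = 2 ^ (n - 1) := by
  have key : (Vset n).card = (Finset.Icc (2 : ℤ) (n : ℤ)).powerset.card := by
    apply Finset.card_nbij' (i := fun V => V.filter (fun v => 2 ≤ v))
      (j := fun S => S ∪ (Finset.Icc (1 : ℤ) (n : ℤ) \ S).image (fun v => -v))
    · intro V hV
      simp only [Finset.mem_coe, Vset, Finset.mem_filter, Finset.mem_powerset] at hV
      rw [Finset.mem_coe, Finset.mem_powerset]
      intro v hv
      have hv1 := Finset.mem_filter.1 hv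
      have := hV.2.1 v hv1.1
      have habs : |v| = v := abs_of_pos (by omega)
      rw [Finset.mem_Icc]
      omega
    · intro S hS
      rw [Finset.mem_coe, Finset.mem_powerset] at hS
      have hSmem : ∀ v ∈ S, 2 ≤ v ∧ v ≤ (n : ℤ) := fun v hv => by
        have := hS hv; rw [Finset.mem_Icc] at this; exact this
      have hnotS : ∀ v : ℤ, v < 2 → v ∉ S := fun v hv hc => by
        have := hSmem v hc; omega
      simp only [Finset.mem_coe, Vset, Finset.mem_filter, Finset.mem_powerset]
      refine ⟨?_, ?_, ?_, ?_⟩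
      · intro v hv
        rcases Finset.mem_union.1 hv with h | h
        · have := hSmem v h; rw [Finset.mem_Icc]; omega
        · obtain ⟨k, hk, rfl⟩ := Finset.mem_image.1 h
          rw [Finset.mem_sdiff, Finset.mem_Icc] at hk
          rw [Finset.mem_Icc]; omega
      · intro v hv
        rcases Finset.mem_union.1 hv with h | h
        · have := hSmem v h
          rw [abs_of_pos (by omega)]; omega
        · obtain ⟨k, hk, rfl⟩ := Finset.mem_image.1 h
          rw [Finset.mem_sdiff, Finset.mem_Icc] at hk
          rw [abs_neg, abs_of_pos (by omega)]; omega
      · intro i hi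
        rw [Finset.mem_Icc] at hi
        by_cases hiS : i ∈ S
        · left
          refine ⟨Finset.mem_union_left _ hiS, fun hc => ?_⟩
          rcases Finset.mem_union.1 hc with h | h
          · exact hnotS (-i) (by omega) h
          · obtain ⟨k, hk, hke⟩ := Finset.mem_image.1 h
            rw [Finset.mem_sdiff] at hk
            have : k = i := by omega
            exact hk.2 (this ▸ hiS)
        · right
          constructor
          · exact Finset.mem_union_right _ (Finset.mem_image.2
              ⟨i, Finset.mem_sdiff.2 ⟨Finset.mem_Icc.2 hi, hiS⟩, rfl⟩)
          · intro hc
            rcases Finset.mem_union.1 hc with h | h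
            · exact hiS h
            · obtain ⟨k, hk, hke⟩ := Finset.mem_image.1 h
              rw [Finset.mem_sdiff, Finset.mem_Icc] at hk
              omega
      · refine Finset.mem_union_right _ (Finset.mem_image.2
          ⟨1, Finset.mem_sdiff.2 ⟨Finset.mem_Icc.2 ⟨le_refl _, by exact_mod_cast hn⟩,
            hnotS 1 (by omega)⟩, by norm_num⟩)
    · -- left inverse
      intro V hV
      simp only [Finset.mem_coe, Vset, Finset.mem_filter, Finset.mem_powerset] at hV
      obtain ⟨hsub, h1, h2, h3⟩ := hV
      have h1V : (1 : ℤ) ∉ V := by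
        intro hc
        rcases h2 1 (Finset.mem_Icc.2 ⟨le_refl _, by exact_mod_cast hn⟩) with ⟨_, hb⟩ | ⟨_, hb⟩
        · exact hb h3
        · exact hb hc
      ext v
      simp only [Finset.mem_union, Finset.mem_filter, Finset.mem_image, Finset.mem_sdiff,
        Finset.mem_Icc]
      constructor
      · rintro (⟨hv, _⟩ | ⟨k, ⟨⟨hk1, hk2⟩, hkn⟩, rfl⟩)
        · exact hv
        · rcases h2 k (Finset.mem_Icc.2 ⟨hk1, hk2⟩) with ⟨ha, _⟩ | ⟨ha, _⟩
          · exfalso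
            apply hkn
            refine ⟨ha, ?_⟩
            by_contra hk2'
            have hk1' : k = 1 := by omega
            exact h1V (hk1' ▸ ha)
          · exact ha
      · intro hv
        have habs := h1 v hv
        by_cases hvpos : 0 < v
        · left
          refine ⟨hv, ?_⟩
          have : v ≠ 1 := fun hc => h1V (hc ▸ hv)
          rw [abs_of_pos hvpos] at habs
          omega
        · right
          refine ⟨-v, ⟨⟨?_, ?_⟩, ?_⟩, by ring⟩
          · rw [abs_of_nonpos (by omega)] at habs; omega
          · rw [abs_of_nonpos (by omega)] at habs; omega
          · rintro ⟨hc, _⟩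
            rcases h2 (-v) (Finset.mem_Icc.2 (by
              rw [abs_of_nonpos (by omega)] at habs; omega)) with ⟨_, hb⟩ | ⟨_, hb⟩
            · exact hb (by rwa [neg_neg])
            · exact hb hc
    · -- right inverse
      intro S hS
      rw [Finset.mem_coe, Finset.mem_powerset] at hS
      ext v
      simp only [Finset.mem_filter, Finset.mem_union, Finset.mem_image]
      constructor
      · rintro ⟨h | h, hv2⟩
        · exact h
        · exfalso
          obtain ⟨k, hk, rfl⟩ := h
          rw [Finset.mem_sdiff, Finset.mem_Icc] at hk
          omega
      · intro hv
        have := hS hv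
        rw [Finset.mem_Icc] at this
        exact ⟨Or.inl hv, this.1⟩
  rw [key, Finset.card_powerset, Int.card_Icc]
  congr 1
  omega

lemma poch_prod (x : ℤ) (m : ℕ) :
    (ascPochhammer ℤ m).eval (x + 1) = ∏ i ∈ Finset.range m, (x + (i : ℤ) + 1) := by
  induction m with
  | zero => simp
  | succ k ih =>
    rw [ascPochhammer_succ_eval, Finset.prod_range_succ, ih]
    ring

/-- for `n ≥ 1`, summing over type B linked partitions of
`{1,…,n}` containing the vertex `-1`,
`∑ x^{os τ - 1} = 2^{n-1}(x+1)_{n-1}`. -/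
theorem lpb_neg_one_enumeration (n : ℕ) (hn : 1 ≤ n) (x : ℤ) :
    ∑ T ∈ (LPB n).filter (fun T => (-1 : ℤ) ∈ T.1), x ^ (osB T.1 T.2 - 1) =
      2 ^ (n - 1) * (ascPochhammer ℤ (n - 1)).eval (x + 1) := by
  have hsplit : ∑ T ∈ (LPB n).filter (fun T => (-1 : ℤ) ∈ T.1), x ^ (osB T.1 T.2 - 1)
      = ∑ V ∈ Vset n, ∑ A ∈ arcSet V, x ^ (osB V A - 1) := by
    rw [Finset.sum_sigma' (Vset n) arcSet (fun V A => x ^ (osB V A - 1))]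
    apply Finset.sum_nbij' (i := fun T => (⟨T.1, T.2⟩ : Σ _ : Finset ℤ, Finset (ℤ × ℤ)))
      (j := fun s => (s.1, s.2))
    · intro T hT
      rw [Finset.mem_sigma]
      exact (mem_split n T).1 hT
    · intro s hs
      rw [mem_split]
      exact ⟨(Finset.mem_sigma.1 hs).1, (Finset.mem_sigma.1 hs).2⟩
    · intro T _; rfl
    · intro s _; rfl
    · intro T _; rfl
  have hval : ∀ V ∈ Vset n, ∑ A ∈ arcSet V, x ^ (osB V A - 1) =
      (ascPochhammer ℤ (n - 1)).eval (x + 1) := by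
    intro V hV
    rw [arcSum x V (Vset_nonempty hV), Vset_card hV, poch_prod]
  rw [hsplit, Finset.sum_congr rfl hval, Finset.sum_const, Vset_card_eq n hn, nsmul_eq_mul]
  push_cast
  ring
end
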